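/- For every natural number d, C(d,4) = (12/(4·3))·L_d(2) − (6/(4·2!))·L_d(3) + (1/3!)·L_d(4) as rational numbers, where L_d(w) = (1/w)·Σ_{r ∣ w} μ(r)·d^{w/r} is the Witt number. -/

import Mathlib

/-!
Since `μ (p ^ i) = 0` for `i ≥ 2`, only the divisors `1` and `p` contribute to the Witt number at
a prime power, so `L_d(2)`, `L_d(3)` and `L_d(4)` are explicit polynomials in `d`, and the claim
becomes a polynomial identity for `C(d,4) = d (d - 1) (d - 2) (d - 3) / 4!`.
-/

/-- The Witt number `L_d(w) = (1/w) * Σ_{r ∣ w} μ(r) * d^(w/r)`, as a rational number. -/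
def witt (d w : ℕ) : ℚ :=
  (1 / w : ℚ) * ∑ r ∈ w.divisors, (ArithmeticFunction.moebius r : ℚ) * (d : ℚ) ^ (w / r)

open ArithmeticFunction ArithmeticFunction.Moebius in
theorem witt_prime_pow (d : ℕ) {p k : ℕ} (hp : p.Prime) (hk : k ≠ 0) :
    witt d (p ^ k) = ((d : ℚ) ^ p ^ k - (d : ℚ) ^ p ^ (k - 1)) / p ^ k := by
  obtain ⟨j, rfl⟩ := Nat.exists_eq_add_one_of_ne_zero hk
  have hμ : ∀ i, (μ (p ^ (i + 1 + 1)) : ℚ) = 0 := fun i => by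
    rw [moebius_apply_prime_pow hp (by omega), if_neg (by omega), Int.cast_zero]
  have hdiv : p ^ (j + 1) / p = p ^ j := by rw [pow_succ, Nat.mul_div_cancel _ hp.pos]
  rw [witt, Nat.divisors_prime_pow hp, Finset.sum_map, Finset.sum_range_succ',
    Finset.sum_range_succ']
  simp only [Function.Embedding.coeFn_mk, hμ, zero_mul, Finset.sum_const_zero, zero_add,
    pow_one, pow_zero, moebius_apply_prime hp, moebius_apply_one, Nat.div_one, hdiv,
    add_tsub_cancel_right, Nat.cast_pow]
  push_cast
  ring

theorem witt_prime (d : ℕ) {p : ℕ} (hp : p.Prime) : witt d p = ((d : ℚ) ^ p - d) / p := by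
  simpa using witt_prime_pow d hp one_ne_zero

/-- C(d,4) = (12/(4·3))·L_d(2) − (6/(4·2!))·L_d(3) + (1/3!)·L_d(4). -/
theorem choose_four_eq (d : ℕ) :
    (d.choose 4 : ℚ) =
      (12 / (4 * 3)) * witt d 2 - (6 / (4 * 2)) * witt d 3 + (1 / 6) * witt d 4 := by
  have witt_four := witt_prime_pow d Nat.prime_two two_ne_zero
  norm_num at witt_four
  rw [Nat.cast_choose_eq_descPochhammer_div, witt_prime d Nat.prime_two,
    witt_prime d Nat.prime_three, witt_four]
  simp [descPochhammer_succ_eval, Nat.factorial]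
  ring
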